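/- Let f : ℝ^d → ℝ be continuously differentiable and L-smooth with a nonempty set S of global minimizers, minimal value f⋆, ∅ ≠ S̃ ⊆ S, and suppose there exist c₁ > 0, c₂ ≥ 0 with ⟨∇f(x), x − proj_{S̃}(x)⟩ ≥ c₁ (f(x) − f⋆) − c₂ for all x. Let l⋆ ≤ f⋆ and run x^{k+1} = x^k − γ^k ∇f(x^k) with γ^k = c₁ (f(x^k) − l⋆)/‖∇f(x^k)‖². Then for every K ≥ 0: min_{0≤k≤K} (f(x^k) − f⋆) ≤ 2L ‖x^0 − x^0_p‖²/(c₁² (K+1)) + σ² + 2c₂/c₁, where σ² := f⋆ − l⋆ and x^0_p := proj_{S̃}(x^0). -/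

import Mathlib

open scoped RealInnerProductSpace

/-!
Let `rₖ = ‖xᵏ − proj xᵏ‖²`. Since `proj xᵏ` is a candidate for the projection of `xᵏ⁺¹`,
expanding the step and using the parametric assumption gives
`rₖ − rₖ₊₁ ≥ γᵏ c₁ aₖ` with `aₖ = f(xᵏ) − f⋆ − σ² − 2c₂/c₁`, because the Polyak step makes
`(γᵏ)²‖∇f(xᵏ)‖² = γᵏ c₁ (f(xᵏ) − l⋆)`. Smoothness gives `‖∇f(x)‖² ≤ 2L(f(x) − f⋆)`, hence
`γᵏ ≥ c₁/(2L)`, so `rₖ − rₖ₊₁ ≥ c₁²/(2L) · aₖ` whenever `aₖ ≥ 0`. If every `aₖ`, `k ≤ K`,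
exceeded `2L r₀/(c₁²(K+1))`, summing would make `r_{K+1}` negative.
-/

section GradientLipschitz

variable {E : Type*} [NormedAddCommGroup E] [InnerProductSpace ℝ E] [CompleteSpace E]
  {f : E → ℝ} {L : ℝ}

theorem hasDerivAt_comp_add_smul {x v : E} {t : ℝ} (hf : DifferentiableAt ℝ f (x + t • v)) :
    HasDerivAt (fun s : ℝ => f (x + s • v)) ⟪gradient f (x + t • v), v⟫ t := by
  have hline : HasDerivAt (fun s : ℝ => x + s • v) v t := by
    simpa using ((hasDerivAt_id t).smul_const v).const_add x
  exact hf.hasGradientAt.hasFDerivAt.comp_hasDerivAt t hline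

theorem le_add_inner_gradient_add_sq_of_lipschitz (hf : Differentiable ℝ f)
    (hsmooth : ∀ y z, ‖gradient f y - gradient f z‖ ≤ L * ‖y - z‖) (x y : E) :
    f y ≤ f x + ⟪gradient f x, y - x⟫ + L / 2 * ‖y - x‖ ^ 2 := by
  set v := y - x
  let φ : ℝ → ℝ := fun t => f (x + t • v) - t * ⟪gradient f x, v⟫ - L / 2 * ‖v‖ ^ 2 * t ^ 2
  have hφ : ∀ t,
      HasDerivAt φ (⟪gradient f (x + t • v), v⟫ - ⟪gradient f x, v⟫ - L * ‖v‖ ^ 2 * t) t := by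
    intro t
    have h := ((hasDerivAt_comp_add_smul (x := x) (v := v) (hf _)).sub ((hasDerivAt_id t).mul_const
      ⟪gradient f x, v⟫)).sub ((hasDerivAt_pow 2 t).const_mul (L / 2 * ‖v‖ ^ 2))
    exact h.congr_deriv (by push_cast; ring)
  have hφ_nonpos : ∀ t, 0 ≤ t →
      ⟪gradient f (x + t • v), v⟫ - ⟪gradient f x, v⟫ - L * ‖v‖ ^ 2 * t ≤ 0 := by
    intro t ht
    have := calc
      ⟪gradient f (x + t • v), v⟫ - ⟪gradient f x, v⟫
          = ⟪gradient f (x + t • v) - gradient f x, v⟫ := (inner_sub_left _ _ _).symm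
      _ ≤ ‖gradient f (x + t • v) - gradient f x‖ * ‖v‖ := real_inner_le_norm _ _
      _ ≤ L * ‖x + t • v - x‖ * ‖v‖ := by gcongr; exact hsmooth _ _
      _ = L * ‖v‖ ^ 2 * t := by
        rw [add_sub_cancel_left, norm_smul, Real.norm_of_nonneg ht]; ring
    linarith
  have hanti : AntitoneOn φ (Set.Icc 0 1) :=
    antitoneOn_of_hasDerivWithinAt_nonpos (convex_Icc 0 1)
      (HasDerivAt.continuousOn fun t _ => hφ t) (fun t _ => (hφ t).hasDerivWithinAt)
      (fun t ht => hφ_nonpos t (interior_subset ht).1)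
  have := hanti (by simp) (by simp) zero_le_one
  simp only [φ, v, zero_smul, one_smul, add_zero, add_sub_cancel] at this
  linarith

theorem norm_gradient_sq_le_of_lipschitz (hf : Differentiable ℝ f) (hL : 0 < L)
    (hsmooth : ∀ y z, ‖gradient f y - gradient f z‖ ≤ L * ‖y - z‖) {m : ℝ} (hm : ∀ y, m ≤ f y)
    (x : E) : ‖gradient f x‖ ^ 2 ≤ 2 * L * (f x - m) := by
  have hstep := le_add_inner_gradient_add_sq_of_lipschitz hf hsmooth x (x - L⁻¹ • gradient f x)
  rw [sub_sub_cancel_left, inner_neg_right, real_inner_smul_right, real_inner_self_eq_norm_sq,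
    norm_neg, norm_smul, mul_pow, Real.norm_of_nonneg (inv_nonneg.2 hL.le)] at hstep
  have hdecrease : f (x - L⁻¹ • gradient f x) ≤ f x - ‖gradient f x‖ ^ 2 / (2 * L) := by
    convert hstep using 1; field_simp; ring
  have := hm (x - L⁻¹ • gradient f x)
  rw [← div_le_iff₀' (by positivity)]
  linarith

end GradientLipschitz

theorem polyak_step_sq_dist_decrease {E : Type*} [NormedAddCommGroup E] [InnerProductSpace ℝ E]
    {x p g : E} {γ c₁ c₂ L Δ σ : ℝ} (hL : 0 < L) (hc₁ : 0 < c₁) (hσ : 0 ≤ σ) (hΔ : 0 ≤ Δ)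
    (hg : ‖g‖ ^ 2 ≤ 2 * L * Δ) (hinner : c₁ * Δ - c₂ ≤ ⟪g, x - p⟫)
    (hγ : γ = c₁ * (Δ + σ) / ‖g‖ ^ 2) (ha : 0 ≤ Δ - σ - 2 * c₂ / c₁) :
    c₁ ^ 2 / (2 * L) * (Δ - σ - 2 * c₂ / c₁) ≤ ‖x - p‖ ^ 2 - ‖x - γ • g - p‖ ^ 2 := by
  have hgap : c₁ * (Δ - σ - 2 * c₂ / c₁) = c₁ * Δ - c₁ * σ - 2 * c₂ := by field_simp
  -- For `g = 0` the step size is the junk value `0`, and the hypotheses force the gap to be `0`.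
  rcases eq_or_ne g 0 with rfl | hg0
  · have : Δ - σ - 2 * c₂ / c₁ = 0 := by
      simp only [inner_zero_left] at hinner
      nlinarith [mul_nonneg hc₁.le hσ, mul_nonneg hc₁.le hΔ]
    simp [this]
  have hg2 : 0 < ‖g‖ ^ 2 := by positivity
  have hγg : γ * ‖g‖ ^ 2 = c₁ * (Δ + σ) := by rw [hγ]; field_simp
  have hγ_ge : c₁ / (2 * L) ≤ γ := by
    rw [hγ, div_le_div_iff₀ (by positivity) hg2]
    nlinarith [mul_le_mul_of_nonneg_left hg hc₁.le, mul_nonneg (mul_nonneg hc₁.le hσ) hL.le]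
  have hexpand : ‖x - γ • g - p‖ ^ 2 = ‖x - p‖ ^ 2 - 2 * γ * ⟪g, x - p⟫ + γ * (γ * ‖g‖ ^ 2) := by
    rw [sub_right_comm, norm_sub_sq_real, real_inner_smul_right, norm_smul, mul_pow,
      Real.norm_eq_abs, sq_abs, real_inner_comm]
    ring
  calc c₁ ^ 2 / (2 * L) * (Δ - σ - 2 * c₂ / c₁)
      = c₁ / (2 * L) * (c₁ * (Δ - σ - 2 * c₂ / c₁)) := by ring
    _ ≤ γ * (c₁ * Δ - c₁ * σ - 2 * c₂) := by
      rw [hgap]; gcongr; rw [← hgap]; positivity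
    _ ≤ ‖x - p‖ ^ 2 - ‖x - γ • g - p‖ ^ 2 := by
      rw [hexpand, hγg]
      nlinarith [mul_le_mul_of_nonneg_left hinner (hγ_ge.trans' (by positivity))]

theorem exists_le_div_of_mul_le_sub_succ {r a : ℕ → ℝ} {C : ℝ} (hC : 0 < C) (hr : ∀ k, 0 ≤ r k)
    (hstep : ∀ k, 0 ≤ a k → C * a k ≤ r k - r (k + 1)) (K : ℕ) :
    ∃ k ≤ K, a k ≤ r 0 / (C * (K + 1)) := by
  by_contra! hlt
  have hbound : 0 ≤ r 0 / (C * (K + 1)) := by have := hr 0; positivity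
  have hsum : ∑ k ∈ Finset.range (K + 1), C * (r 0 / (C * (K + 1))) <
      ∑ k ∈ Finset.range (K + 1), (r k - r (k + 1)) := by
    refine Finset.sum_lt_sum_of_nonempty Finset.nonempty_range_add_one fun k hk => ?_
    have hk := hlt k (Nat.lt_succ_iff.mp (Finset.mem_range.mp hk))
    exact (mul_lt_mul_of_pos_left hk hC).trans_le (hstep k (hbound.trans hk.le))
  rw [Finset.sum_range_sub', Finset.sum_const, Finset.card_range, nsmul_eq_mul] at hsum
  have : ((K + 1 : ℕ) : ℝ) * (C * (r 0 / (C * (K + 1)))) = r 0 := by push_cast; field_simp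
  linarith [hr (K + 1)]

theorem polyak_stepsize_lower_bound_rate_general
    {d : ℕ} (f : EuclideanSpace ℝ (Fin d) → ℝ)
    (hf : ContDiff ℝ 1 f)
    (L : ℝ) (hL : 0 < L)
    (hsmooth : ∀ y z, ‖gradient f y - gradient f z‖ ≤ L * ‖y - z‖)
    (S St : Set (EuclideanSpace ℝ (Fin d)))
    (hSne : S.Nonempty)
    (hSmin : ∀ s ∈ S, ∀ y, f s ≤ f y)
    (fstar : ℝ) (hfstar : ∀ s ∈ S, f s = fstar)
    (proj : EuclideanSpace ℝ (Fin d) → EuclideanSpace ℝ (Fin d))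
    (hproj : ∀ y, proj y ∈ St ∧ ∀ z ∈ St, ‖y - proj y‖ ≤ ‖y - z‖)
    (c₁ c₂ : ℝ) (hc₁ : 0 < c₁)
    (hass : ∀ y, c₁ * (f y - fstar) - c₂ ≤ ⟪gradient f y, y - proj y⟫)
    (lstar : ℝ) (hlstar : lstar ≤ fstar)
    (x : ℕ → EuclideanSpace ℝ (Fin d)) (γ : ℕ → ℝ)
    (hupd : ∀ k, x (k + 1) = x k - γ k • gradient f (x k))
    (hγ : ∀ k, γ k = c₁ * (f (x k) - lstar) / ‖gradient f (x k)‖ ^ 2)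
    (K : ℕ) :
    (Finset.range (K + 1)).inf' ⟨0, Finset.mem_range.mpr (Nat.succ_pos K)⟩ (fun k => f (x k) - fstar) ≤
      2 * L * ‖x 0 - proj (x 0)‖ ^ 2 / (c₁ ^ 2 * (K + 1)) + (fstar - lstar)
      + 2 * c₂ / c₁ := by
  have hdiff : Differentiable ℝ f := hf.differentiable one_ne_zero
  have hmin : ∀ y, fstar ≤ f y := by
    obtain ⟨s, hs⟩ := hSne
    exact hfstar s hs ▸ hSmin s hs
  have hstep : ∀ k, 0 ≤ f (x k) - fstar - (fstar - lstar) - 2 * c₂ / c₁ →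
      c₁ ^ 2 / (2 * L) * (f (x k) - fstar - (fstar - lstar) - 2 * c₂ / c₁) ≤
        ‖x k - proj (x k)‖ ^ 2 - ‖x (k + 1) - proj (x (k + 1))‖ ^ 2 := by
    intro k hk
    have hproj_next := (hproj (x (k + 1))).2 _ (hproj (x k)).1
    refine (polyak_step_sq_dist_decrease hL hc₁ (sub_nonneg.2 hlstar) (sub_nonneg.2 (hmin _))
      (norm_gradient_sq_le_of_lipschitz hdiff hL hsmooth hmin _) (hass _)
      (γ := γ k) (by rw [hγ]; ring) hk).trans ?_
    rw [← hupd]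
    gcongr
  obtain ⟨k, hk, hak⟩ := exists_le_div_of_mul_le_sub_succ (by positivity)
    (fun k => sq_nonneg ‖x k - proj (x k)‖) hstep K
  refine (Finset.inf'_le _ (Finset.mem_range.2 (Nat.lt_succ_of_le hk))).trans ?_
  have hconst : ‖x 0 - proj (x 0)‖ ^ 2 / (c₁ ^ 2 / (2 * L) * (K + 1)) =
      2 * L * ‖x 0 - proj (x 0)‖ ^ 2 / (c₁ ^ 2 * (K + 1)) := by
    field_simp
  linarith

/-- Polyak-type stepsize with a lower bound `l⋆ ≤ f⋆` (Table 2, second row):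
under the unified parametric assumption with `P(x) = f(x) − f⋆` and `L`-smoothness,
gradient descent with `γᵏ = c₁(f(xᵏ) − l⋆)/‖∇f(xᵏ)‖²` achieves an `O(1/K)` rate up to
the neighborhood `σ² + 2c₂/c₁`, where `σ² = f⋆ − l⋆`. -/
theorem polyak_stepsize_lower_bound_rate
    {d : ℕ} (f : EuclideanSpace ℝ (Fin d) → ℝ)
    (hf : ContDiff ℝ 1 f)
    (L : ℝ) (hL : 0 < L)
    (hsmooth : ∀ y z, ‖gradient f y - gradient f z‖ ≤ L * ‖y - z‖)
    (S St : Set (EuclideanSpace ℝ (Fin d)))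
    (hSne : S.Nonempty)
    (hSmin : ∀ s ∈ S, ∀ y, f s ≤ f y)
    (fstar : ℝ) (hfstar : ∀ s ∈ S, f s = fstar)
    (hStS : St ⊆ S) (hStne : St.Nonempty)
    (proj : EuclideanSpace ℝ (Fin d) → EuclideanSpace ℝ (Fin d))
    (hproj : ∀ y, proj y ∈ St ∧ ∀ z ∈ St, ‖y - proj y‖ ≤ ‖y - z‖)
    (c₁ c₂ : ℝ) (hc₁ : 0 < c₁) (hc₂ : 0 ≤ c₂)
    (hass : ∀ y, c₁ * (f y - fstar) - c₂ ≤ ⟪gradient f y, y - proj y⟫)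
    (lstar : ℝ) (hlstar : lstar ≤ fstar)
    (x : ℕ → EuclideanSpace ℝ (Fin d)) (γ : ℕ → ℝ)
    (hupd : ∀ k, x (k + 1) = x k - γ k • gradient f (x k))
    (hγ : ∀ k, γ k = c₁ * (f (x k) - lstar) / ‖gradient f (x k)‖ ^ 2)
    (K : ℕ) :
    (Finset.range (K + 1)).inf' ⟨0, Finset.mem_range.mpr (Nat.succ_pos K)⟩ (fun k => f (x k) - fstar) ≤
      2 * L * ‖x 0 - proj (x 0)‖ ^ 2 / (c₁ ^ 2 * (K + 1)) + (fstar - lstar)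
      + 2 * c₂ / c₁ :=
  polyak_stepsize_lower_bound_rate_general f hf L hL hsmooth S St hSne hSmin fstar hfstar proj hproj
    c₁ c₂ hc₁ hass lstar hlstar x γ hupd hγ K
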